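/- arXiv:math/0506247 — 3 statements merged into one kernel-verified Lean document; each statement's English description precedes it below -/
import Mathlib

section
/- Let m ∈ ℝ and let b : ℝ^n × ℝ^n → ℂ be a continuous function such that for every N > 0 there is a constant C_N with |b(η,ξ)| ≤ C_N (1+|ξ|)^m (1+|η|)^{−N} for all η, ξ. For an integer k ≥ 10 define ρ_k(x,ξ) = (2π)^{−n} ∫_{ℝ^n} e^{i x·η} b(η,ξ) ( φ(2^{−k}(ξ+η)) − φ(2^{−k}ξ) ) dη. Then there is a constant C, depending only on n, m, φ and the family of constants (C_N), such that for every k ≥ 10, every x ∈ ℝ^n and every ξ with 2^{k−3} ≤ |ξ| ≤ 2^{k+3}: |ρ_k(x,ξ)| ≤ C (1+|ξ|)^{m−1}. -/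
noncomputable section

open MeasureTheory Complex
open scoped ENNReal RealInnerProductSpace

abbrev En (n : ℕ) : Type := EuclideanSpace ℝ (Fin n)

/-- Fourier transform with convention f̂(ξ) = ∫ f(x) e^{−i x·ξ} dx. -/
def FT {n : ℕ} (f : En n → ℂ) (ξ : En n) : ℂ :=
  ∫ x : En n, f x * Complex.exp (-(Complex.I * Complex.ofReal ⟪x, ξ⟫))

/-- Inverse Fourier transform kernel of the dilated Littlewood–Paley symbol φ(·/2^j). -/
def LPker {n : ℕ} (φ : En n → ℝ) (j : ℤ) (z : En n) : ℂ :=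
  (((2 * Real.pi) ^ n)⁻¹ : ℝ) *
    ∫ ξ : En n, Complex.exp (Complex.I * Complex.ofReal ⟪z, ξ⟫) *
      Complex.ofReal (φ ((2 : ℝ) ^ (-j) • ξ))

/-- Littlewood–Paley projection `P_j f`, realized as convolution with the kernel
`ψ_j = (φ(·/2^j) f̂)^∨`; for nice `f` this is exactly `(P_j f)^ = φ(·/2^j) f̂`. -/
def LP {n : ℕ} (φ : En n → ℝ) (j : ℤ) (f : En n → ℂ) (x : En n) : ℂ :=
  ∫ y : En n, f y * LPker φ j (x - y)

/-- Symbol of the low-frequency projection `P_{·≤0} = ∑_{j≤0} P_j`. -/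
def lowSymb {n : ℕ} (φ : En n → ℝ) (ξ : En n) : ℝ :=
  ∑' j : ℤ, if j ≤ 0 then φ ((2 : ℝ) ^ (-j) • ξ) else 0

/-- Kernel of the low-frequency projection. -/
def LPlowKer {n : ℕ} (φ : En n → ℝ) (z : En n) : ℂ :=
  (((2 * Real.pi) ^ n)⁻¹ : ℝ) *
    ∫ ξ : En n, Complex.exp (Complex.I * Complex.ofReal ⟪z, ξ⟫) *
      Complex.ofReal (lowSymb φ ξ)

/-- Low-frequency projection `P_{·≤0} f`. -/
def LPlow {n : ℕ} (φ : En n → ℝ) (f : En n → ℂ) (x : En n) : ℂ :=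
  ∫ y : En n, f y * LPlowKer φ (x - y)

/-- The standing hypotheses on the Littlewood–Paley bump function φ:
smooth, valued in [0,1], supported in the annulus {3/5 ≤ |ξ| ≤ 5/3}, and
∑_{j∈ℤ} φ(ξ/2^j) = 1 for every ξ ≠ 0. -/
def LPfamily {n : ℕ} (φ : En n → ℝ) : Prop :=
  ContDiff ℝ (⊤ : ℕ∞) φ ∧ (∀ ξ, 0 ≤ φ ξ ∧ φ ξ ≤ 1) ∧
  (∀ ξ, φ ξ ≠ 0 → 3 / 5 ≤ ‖ξ‖ ∧ ‖ξ‖ ≤ 5 / 3) ∧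
  (∀ ξ : En n, ξ ≠ 0 → HasSum (fun j : ℤ => φ ((2 : ℝ) ^ (-j) • ξ)) 1)

/-- `a` is a symbol of class `S^m` on ℝ^n: smooth, and for all multi-indices
(encoded by the orders `k`, `l` of iterated Fréchet derivatives)
`‖∂_ξ^k ∂_x^l a(x,ξ)‖ ≤ C_{k,l} (1+|ξ|)^{m−k}`. -/
def IsSymbol {n : ℕ} (m : ℝ) (a : En n → En n → ℂ) : Prop :=
  ContDiff ℝ (⊤ : ℕ∞) (fun p : En n × En n => a p.1 p.2) ∧
  ∀ k l : ℕ, ∃ C : ℝ, ∀ x ξ : En n,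
    ‖iteratedFDeriv ℝ k (fun ξ' => iteratedFDeriv ℝ l (fun x' => a x' ξ') x) ξ‖
      ≤ C * (1 + ‖ξ‖) ^ (m - (k : ℝ))

/-- The pseudodifferential operator with symbol `a`:
`A f (x) = (2π)^{-n} ∫ e^{i x·ξ} a(x,ξ) f̂(ξ) dξ`. -/
def PsDO {n : ℕ} (a : En n → En n → ℂ) (f : En n → ℂ) (x : En n) : ℂ :=
  (((2 * Real.pi) ^ n)⁻¹ : ℝ) *
    ∫ ξ : En n, Complex.exp (Complex.I * Complex.ofReal ⟪x, ξ⟫) * a x ξ * FT f ξ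

/-- Fourier transform of a symbol in its first (the `x`) variable:
`â(η,ξ) = ∫ a(x,ξ) e^{−i x·η} dx`. -/
def FT1 {n : ℕ} (a : En n → En n → ℂ) (η ξ : En n) : ℂ :=
  ∫ x : En n, a x ξ * Complex.exp (-(Complex.I * Complex.ofReal ⟪x, η⟫))

/-- The remainder symbol
`ρ_k(x,ξ) = (2π)^{−n} ∫ e^{i x·η} b(η,ξ) (φ(2^{−k}(ξ+η)) − φ(2^{−k}ξ)) dη`. -/
def rhoK {n : ℕ} (φ : En n → ℝ) (b : En n → En n → ℂ) (k : ℕ) (x ξ : En n) : ℂ :=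
  (((2 * Real.pi) ^ n)⁻¹ : ℝ) *
    ∫ η : En n, Complex.exp (Complex.I * Complex.ofReal ⟪x, η⟫) * b η ξ *
      Complex.ofReal (φ ((2 : ℝ) ^ (-(k : ℤ)) • (ξ + η)) - φ ((2 : ℝ) ^ (-(k : ℤ)) • ξ))

/-- The `W^{s,p}` norm
`‖f‖ = (‖P_{·≤0}f‖_p^p + ‖(∑_{j≥1} 2^{2js} |P_j f|²)^{1/2}‖_p^p)^{1/p}`. -/
def WNorm {n : ℕ} (φ : En n → ℝ) (s : ℝ) (p : ℝ≥0∞) (f : En n → ℂ) : ℝ≥0∞ :=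
  (eLpNorm (LPlow φ f) p volume ^ p.toReal +
      eLpNorm
        (fun x =>
          (∑' j : ℕ, (2 : ℝ) ^ (2 * ((j : ℝ) + 1) * s) * ‖LP φ ((j : ℤ) + 1) f x‖ ^ 2)
            ^ (1 / 2 : ℝ))
        p volume ^ p.toReal) ^ (1 / p.toReal)

/-- Low-low frequency interaction zone. -/
def LLzone (k : ℤ) : Set (ℤ × ℤ) :=
  {ij : ℤ × ℤ | k - 5 ≤ ij.1 ∧ ij.1 ≤ k + 7 ∧ k - 5 ≤ ij.2 ∧ ij.2 ≤ k + 7 ∧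
    min ij.1 ij.2 ≤ k + 5}

/-- Low-high frequency interaction zone. -/
def LHzone (k : ℤ) : Set (ℤ × ℤ) :=
  {ij : ℤ × ℤ | ij.1 < k - 5 ∧ k - 3 ≤ ij.2 ∧ ij.2 ≤ k + 3}

/-- High-low frequency interaction zone. -/
def HLzone (k : ℤ) : Set (ℤ × ℤ) :=
  {ij : ℤ × ℤ | k - 3 ≤ ij.1 ∧ ij.1 ≤ k + 3 ∧ ij.2 < k - 5}

/-- High-high frequency interaction zone. -/
def HHzone (k : ℤ) : Set (ℤ × ℤ) :=
  {ij : ℤ × ℤ | k + 5 < ij.1 ∧ k + 5 < ij.2 ∧ |ij.1 - ij.2| ≤ 3}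

/-- Estimate for the remainder symbol `ρ_k` in the middle-frequency regime
`2^{k−3} ≤ |ξ| ≤ 2^{k+3}`: `|ρ_k(x,ξ)| ≤ C (1+|ξ|)^{m−1}`. -/
theorem rho_middle_estimate (n : ℕ) (m : ℝ) (φ : En n → ℝ) (hφ : LPfamily φ)
    (b : En n → En n → ℂ)
    (hb : Continuous fun p : En n × En n => b p.1 p.2)
    (hbdecay : ∀ N : ℝ, 0 < N → ∃ C : ℝ, ∀ η ξ : En n,
      ‖b η ξ‖ ≤ C * (1 + ‖ξ‖) ^ m * (1 + ‖η‖) ^ (-N)) :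
    ∃ C : ℝ, 0 ≤ C ∧ ∀ k : ℕ, 10 ≤ k → ∀ x ξ : En n,
      (2 : ℝ) ^ ((k : ℝ) - 3) ≤ ‖ξ‖ → ‖ξ‖ ≤ (2 : ℝ) ^ ((k : ℝ) + 3) →
      ‖rhoK φ b k x ξ‖ ≤ C * (1 + ‖ξ‖) ^ (m - 1) := by
  obtain ⟨hsm, hrange, hsupp, -⟩ := hφ
  -- φ has compact support, hence is Lipschitz
  have hcs : HasCompactSupport φ := by
    apply HasCompactSupport.intro (isCompact_closedBall (0 : En n) (5/3))
    intro x hx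
    by_contra h
    exact hx (Metric.mem_closedBall.2 (by simpa using (hsupp x h).2))
  obtain ⟨L, hL⟩ := hsm.lipschitzWith_of_hasCompactSupport hcs (by norm_num)
  -- decay constant for b with N = n + 2
  obtain ⟨C0, hC0⟩ := hbdecay ((n : ℝ) + 2) (by positivity)
  obtain ⟨Cb, hCb0, hbbd⟩ : ∃ Cb : ℝ, 0 ≤ Cb ∧ ∀ η ξ : En n,
      ‖b η ξ‖ ≤ Cb * (1 + ‖ξ‖) ^ m * (1 + ‖η‖) ^ (-((n:ℝ)+2)) := by
    refine ⟨max C0 0, le_max_right _ _, fun η ξ => (hC0 η ξ).trans ?_⟩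
    apply mul_le_mul_of_nonneg_right _ (by positivity)
    exact mul_le_mul_of_nonneg_right (le_max_left _ _) (by positivity)
  -- the universal integral
  have hI : Integrable (fun η : En n => (1 + ‖η‖) ^ (-((n:ℝ)+1))) (volume : Measure (En n)) := by
    apply integrable_one_add_norm
    simp
  obtain ⟨I, hIdef, hI0⟩ : ∃ I : ℝ,
      (∫ η : En n, (1 + ‖η‖) ^ (-((n:ℝ)+1))) = I ∧ 0 ≤ I :=
    ⟨_, rfl, integral_nonneg fun η => by positivity⟩
  refine ⟨Cb * L * 16 * I,
    mul_nonneg (mul_nonneg (mul_nonneg hCb0 L.coe_nonneg) (by norm_num)) hI0, ?_⟩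
  intro k hk x ξ hξl hξu
  have hξ1 : (1 : ℝ) ≤ ‖ξ‖ := by
    refine le_trans ?_ hξl
    have h10 : (1:ℝ) = (2:ℝ) ^ (0:ℝ) := by norm_num
    rw [h10]
    apply Real.rpow_le_rpow_of_exponent_le (by norm_num)
    have : (10:ℝ) ≤ (k:ℝ) := by exact_mod_cast hk
    linarith
  have h1ξ : (0:ℝ) < 1 + ‖ξ‖ := by linarith
  rw [rhoK, norm_mul]
  set c : ℝ := (2 : ℝ) ^ (-(k : ℤ)) with hc
  have hc0 : 0 < c := by positivity
  have hcr : c = (2:ℝ) ^ (-(k:ℝ)) := by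
    rw [hc, ← Real.rpow_intCast]
    norm_num
  clear_value c
  clear hc
  -- key: c * (1 + ‖ξ‖) ≤ 16
  have hkey : c * (1 + ‖ξ‖) ≤ 16 := by
    have h2 : 1 + ‖ξ‖ ≤ 2 * ‖ξ‖ := by linarith
    calc c * (1 + ‖ξ‖) ≤ c * (2 * (2:ℝ) ^ ((k:ℝ)+3)) := by
          apply mul_le_mul_of_nonneg_left (by linarith) hc0.le
      _ = 16 := by
          rw [hcr, ← mul_assoc, mul_comm _ (2:ℝ), mul_assoc, ← Real.rpow_add (by norm_num)]
          rw [show -(k:ℝ) + ((k:ℝ)+3) = 3 by ring]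
          norm_num
  -- pointwise bound
  obtain ⟨M, hM⟩ : ∃ M : ℝ, M = Cb * (1 + ‖ξ‖) ^ m * L * c := ⟨_, rfl⟩
  have hpt : ∀ η : En n,
      ‖Complex.exp (Complex.I * Complex.ofReal ⟪x, η⟫) * b η ξ *
        Complex.ofReal (φ (c • (ξ + η)) - φ (c • ξ))‖
      ≤ M * (1 + ‖η‖) ^ (-((n:ℝ)+1)) := by
    intro η
    rw [norm_mul, norm_mul]
    have he : ‖Complex.exp (Complex.I * Complex.ofReal ⟪x, η⟫)‖ = 1 := by
      simp [Complex.norm_exp, Complex.mul_re]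
    rw [he, one_mul]
    have hφd : ‖(Complex.ofReal (φ (c • (ξ + η)) - φ (c • ξ)))‖ ≤ (L : ℝ) * (c * ‖η‖) := by
      rw [Complex.norm_real, Real.norm_eq_abs, ← Real.dist_eq]
      refine (hL.dist_le_mul _ _).trans ?_
      have hd : dist (c • (ξ + η)) (c • ξ) = c * ‖η‖ := by
        rw [dist_eq_norm]
        have hcc : c • (ξ + η) - c • ξ = c • η := by
          rw [smul_add]; abel
        rw [hcc, norm_smul, Real.norm_eq_abs, _root_.abs_of_pos hc0]
      rw [hd]
    calc ‖b η ξ‖ * ‖(Complex.ofReal (φ (c • (ξ + η)) - φ (c • ξ)))‖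
        ≤ (Cb * (1 + ‖ξ‖) ^ m * (1 + ‖η‖) ^ (-((n:ℝ)+2))) * ((L:ℝ) * (c * ‖η‖)) := by
          apply mul_le_mul (hbbd η ξ) hφd (norm_nonneg _)
          positivity
      _ ≤ M * (1 + ‖η‖) ^ (-((n:ℝ)+1)) := by
          rw [hM]
          have h1η : (0:ℝ) < 1 + ‖η‖ := by positivity
          have hηle : ‖η‖ ≤ 1 + ‖η‖ := by linarith
          have hstep : (1 + ‖η‖) ^ (-((n:ℝ)+2)) * ‖η‖ ≤ (1 + ‖η‖) ^ (-((n:ℝ)+1)) := by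
            calc (1 + ‖η‖) ^ (-((n:ℝ)+2)) * ‖η‖
                ≤ (1 + ‖η‖) ^ (-((n:ℝ)+2)) * (1 + ‖η‖) := by
                  apply mul_le_mul_of_nonneg_left hηle (by positivity)
              _ = (1 + ‖η‖) ^ (-((n:ℝ)+1)) := by
                  rw [← Real.rpow_add_one h1η.ne']
                  ring_nf
          calc Cb * (1 + ‖ξ‖) ^ m * (1 + ‖η‖) ^ (-((n:ℝ)+2)) * ((L:ℝ) * (c * ‖η‖))
              = (Cb * (1 + ‖ξ‖) ^ m * (L:ℝ) * c) * ((1 + ‖η‖) ^ (-((n:ℝ)+2)) * ‖η‖) := by ring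
            _ ≤ (Cb * (1 + ‖ξ‖) ^ m * (L:ℝ) * c) * ((1 + ‖η‖) ^ (-((n:ℝ)+1))) := by
                apply mul_le_mul_of_nonneg_left hstep (by positivity)
  -- bound the integral
  have hint : ‖∫ η : En n, Complex.exp (Complex.I * Complex.ofReal ⟪x, η⟫) * b η ξ *
        Complex.ofReal (φ (c • (ξ + η)) - φ (c • ξ))‖ ≤ M * I := by
    have h := norm_integral_le_of_norm_le (hI.const_mul M) (Filter.Eventually.of_forall hpt)
    rwa [integral_const_mul, hIdef] at h
  have hpre : ‖((((2 * Real.pi) ^ n)⁻¹ : ℝ) : ℂ)‖ ≤ 1 := by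
    rw [Complex.norm_real, Real.norm_eq_abs, _root_.abs_of_nonneg (by positivity)]
    rw [inv_le_one_iff₀]
    right
    apply one_le_pow₀
    nlinarith [Real.pi_gt_three]
  calc ‖((((2 * Real.pi) ^ n)⁻¹ : ℝ) : ℂ)‖ * ‖∫ η : En n,
          Complex.exp (Complex.I * Complex.ofReal ⟪x, η⟫) * b η ξ *
          Complex.ofReal (φ (c • (ξ + η)) - φ (c • ξ))‖
      ≤ 1 * (M * I) := mul_le_mul hpre hint (norm_nonneg _) (by norm_num)
    _ = M * I := one_mul _
    _ ≤ Cb * L * 16 * I * (1 + ‖ξ‖) ^ (m - 1) := by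
        have hm : (1 + ‖ξ‖) ^ m = (1 + ‖ξ‖) ^ (m - 1) * (1 + ‖ξ‖) := by
          rw [← Real.rpow_add_one h1ξ.ne']
          ring_nf
        rw [hM, hm]
        have hre : Cb * ((1 + ‖ξ‖) ^ (m-1) * (1 + ‖ξ‖)) * (L:ℝ) * c * I
            = (Cb * (L:ℝ) * I * (1 + ‖ξ‖) ^ (m-1)) * (c * (1 + ‖ξ‖)) := by ring
        rw [hre]
        calc (Cb * (L:ℝ) * I * (1 + ‖ξ‖) ^ (m-1)) * (c * (1 + ‖ξ‖))
            ≤ (Cb * (L:ℝ) * I * (1 + ‖ξ‖) ^ (m-1)) * 16 := by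
              apply mul_le_mul_of_nonneg_left hkey (by positivity)
          _ = Cb * L * 16 * I * (1 + ‖ξ‖) ^ (m - 1) := by ring
end
end

section
/- Let m ∈ ℝ and let b : ℝ^n × ℝ^n → ℂ be a continuous function such that for every N > 0 there is a constant C_N with |b(η,ξ)| ≤ C_N (1+|ξ|)^m (1+|η|)^{−N} for all η, ξ. For an integer k ≥ 10 define ρ_k(x,ξ) = (2π)^{−n} ∫_{ℝ^n} e^{i x·η} b(η,ξ) ( φ(2^{−k}(ξ+η)) − φ(2^{−k}ξ) ) dη. Then for every N > 0 there is a constant C, depending only on n, m, N, φ and the family of constants (C_M), such that for every k ≥ 10, every x ∈ ℝ^n and every ξ with |ξ| ≤ 2^{k−3}: |ρ_k(x,ξ)| ≤ C · 2^{−Nk}. -/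
noncomputable section

open MeasureTheory Complex
open scoped ENNReal RealInnerProductSpace

/-- Estimate for the remainder symbol `ρ_k` in the low-frequency regime
`|ξ| ≤ 2^{k−3}`: `|ρ_k(x,ξ)| ≤ C 2^{−Nk}`. -/
theorem rho_low_estimate (n : ℕ) (m : ℝ) (φ : En n → ℝ) (hφ : LPfamily φ)
    (b : En n → En n → ℂ)
    (hb : Continuous fun p : En n × En n => b p.1 p.2)
    (hbdecay : ∀ N : ℝ, 0 < N → ∃ C : ℝ, ∀ η ξ : En n,
      ‖b η ξ‖ ≤ C * (1 + ‖ξ‖) ^ m * (1 + ‖η‖) ^ (-N))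
    (N : ℝ) (hN : 0 < N) :
    ∃ C : ℝ, 0 ≤ C ∧ ∀ k : ℕ, 10 ≤ k → ∀ x ξ : En n,
      ‖ξ‖ ≤ (2 : ℝ) ^ ((k : ℝ) - 3) →
      ‖rhoK φ b k x ξ‖ ≤ C * (2 : ℝ) ^ (-(N * (k : ℝ))) := by
  obtain ⟨hsm, hrange, hsupp, -⟩ := hφ
  have hMpos : (0:ℝ) < N + |m| + ((n:ℝ) + 1) := by positivity
  obtain ⟨C₀, hC₀⟩ := hbdecay _ hMpos
  set C₁ : ℝ := max C₀ 0 with hC₁def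
  have hC₁nn : 0 ≤ C₁ := le_max_right _ _
  have hb' : ∀ η ζ : En n, ‖b η ζ‖ ≤
      C₁ * (1+‖ζ‖)^m * (1+‖η‖)^(-(N + |m| + ((n:ℝ) + 1))) := by
    intro η ζ
    refine (hC₀ η ζ).trans ?_
    have h1 : (0:ℝ) ≤ (1+‖ζ‖)^m := Real.rpow_nonneg (by positivity) _
    have h2 : (0:ℝ) ≤ (1+‖η‖)^(-(N + |m| + ((n:ℝ) + 1))) :=
      Real.rpow_nonneg (by positivity) _
    exact mul_le_mul_of_nonneg_right (mul_le_mul_of_nonneg_right (le_max_left _ _) h1) h2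
  have hI : Integrable (fun η : En n => (1 + ‖η‖) ^ (-((n:ℝ)+1))) volume := by
    apply integrable_one_add_norm
    rw [finrank_euclideanSpace, Fintype.card_fin]
    linarith
  set I : ℝ := ∫ η : En n, (1 + ‖η‖) ^ (-((n:ℝ)+1)) with hIdef
  have hInn : 0 ≤ I :=
    integral_nonneg fun η => Real.rpow_nonneg (by positivity) _
  have hPnn : (0:ℝ) ≤ (((2*Real.pi)^n)⁻¹ : ℝ) := by positivity
  have h4019 : (0:ℝ) ≤ (40/19 : ℝ)^(N+|m|) := Real.rpow_nonneg (by norm_num) _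
  refine ⟨(((2*Real.pi)^n)⁻¹ : ℝ) * C₁ * I * (40/19 : ℝ)^(N+|m|),
    mul_nonneg (mul_nonneg (mul_nonneg hPnn hC₁nn) hInn) h4019, ?_⟩
  intro k hk x ξ hξ
  set B : ℝ := (2:ℝ)^(k:ℝ) with hBdef
  have hBpos : 0 < B := Real.rpow_pos_of_pos two_pos _
  have hB1024 : (1024:ℝ) ≤ B := by
    have h10 : (2:ℝ)^(10:ℝ) ≤ (2:ℝ)^(k:ℝ) :=
      Real.rpow_le_rpow_of_exponent_le one_le_two (by exact_mod_cast hk)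
    have : (2:ℝ)^(10:ℝ) = 1024 := by
      rw [show (10:ℝ) = ((10:ℕ):ℝ) by norm_num, Real.rpow_natCast]; norm_num
    linarith
  have hξB : ‖ξ‖ ≤ B/8 := by
    have h8 : (2:ℝ)^(3:ℝ) = 8 := by
      rw [show (3:ℝ) = ((3:ℕ):ℝ) by norm_num, Real.rpow_natCast]; norm_num
    have h3 : (2:ℝ)^((k:ℝ)-3) = B/8 := by
      rw [Real.rpow_sub two_pos, h8]
    linarith [hξ, h3.symm.le]
  have hzpow : ((2:ℝ)^(-(k:ℤ))) = B⁻¹ := by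
    rw [← Real.rpow_intCast 2 (-(k:ℤ))]
    push_cast
    rw [Real.rpow_neg (by norm_num)]
  have hφ0 : φ ((2:ℝ)^(-(k:ℤ)) • ξ) = 0 := by
    by_contra h
    have h35 := (hsupp _ h).1
    rw [norm_smul, hzpow, Real.norm_eq_abs, abs_of_pos (inv_pos.mpr hBpos)] at h35
    have h1 : B⁻¹ * ‖ξ‖ ≤ B⁻¹ * (B/8) :=
      mul_le_mul_of_nonneg_left hξB (by positivity)
    have h2 : B⁻¹ * (B/8) = 1/8 := by field_simp
    linarith
  set R : ℝ := 19/40 * B with hRdef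
  have hRpos : 0 < R := by positivity
  have hR1 : (1:ℝ) ≤ R := by rw [hRdef]; nlinarith
  have hcξnn : (0:ℝ) ≤ (1+‖ξ‖)^m := Real.rpow_nonneg (by positivity) _
  have hRs : (0:ℝ) ≤ R^(-(N+|m|)) := Real.rpow_nonneg hRpos.le _
  set c : ℝ := C₁ * (1+‖ξ‖)^m * R^(-(N+|m|)) with hcdef
  have hcnn : 0 ≤ c := mul_nonneg (mul_nonneg hC₁nn hcξnn) hRs
  have hpt : ∀ η : En n,
      ‖Complex.exp (Complex.I * Complex.ofReal ⟪x, η⟫) * b η ξ *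
        Complex.ofReal (φ ((2 : ℝ) ^ (-(k : ℤ)) • (ξ + η)) - φ ((2 : ℝ) ^ (-(k : ℤ)) • ξ))‖
      ≤ c * (1+‖η‖)^(-((n:ℝ)+1)) := by
    intro η
    rw [hφ0, sub_zero]
    by_cases h : φ ((2 : ℝ) ^ (-(k : ℤ)) • (ξ + η)) = 0
    · rw [h]
      simp only [Complex.ofReal_zero, mul_zero, norm_zero]
      exact mul_nonneg hcnn (Real.rpow_nonneg (by positivity) _)
    · have hηR : R ≤ ‖η‖ := by
        have h35 := (hsupp _ h).1
        rw [norm_smul, hzpow, Real.norm_eq_abs, abs_of_pos (inv_pos.mpr hBpos)] at h35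
        have hξη : 3/5 * B ≤ ‖ξ + η‖ := by
          have := mul_le_mul_of_nonneg_left h35 hBpos.le
          rw [← mul_assoc, mul_inv_cancel₀ hBpos.ne', one_mul] at this
          linarith
        have htri : ‖ξ + η‖ ≤ ‖ξ‖ + ‖η‖ := norm_add_le _ _
        rw [hRdef]; linarith
      have hexp : ‖Complex.exp (Complex.I * Complex.ofReal ⟪x, η⟫)‖ = 1 := by
        rw [Complex.norm_exp]
        simp
      have hφle : ‖(Complex.ofReal (φ ((2 : ℝ) ^ (-(k : ℤ)) • (ξ + η))) : ℂ)‖ ≤ 1 := by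
        rw [Complex.norm_real, Real.norm_eq_abs,
          _root_.abs_of_nonneg (hrange _).1]
        exact (hrange _).2
      calc ‖Complex.exp (Complex.I * Complex.ofReal ⟪x, η⟫) * b η ξ *
            Complex.ofReal (φ ((2 : ℝ) ^ (-(k : ℤ)) • (ξ + η)))‖
          = ‖b η ξ‖ *
            ‖(Complex.ofReal (φ ((2 : ℝ) ^ (-(k : ℤ)) • (ξ + η))) : ℂ)‖ := by
            rw [norm_mul, norm_mul, hexp, one_mul]
        _ ≤ ‖b η ξ‖ * 1 := mul_le_mul_of_nonneg_left hφle (norm_nonneg _)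
        _ = ‖b η ξ‖ := mul_one _
        _ ≤ C₁ * (1+‖ξ‖)^m * (1+‖η‖)^(-(N + |m| + ((n:ℝ) + 1))) := hb' η ξ
        _ = C₁ * (1+‖ξ‖)^m * ((1+‖η‖)^(-(N+|m|)) * (1+‖η‖)^(-((n:ℝ)+1))) := by
            rw [show -(N + |m| + ((n:ℝ)+1)) = -(N+|m|) + -((n:ℝ)+1) by ring,
              Real.rpow_add (by positivity)]
        _ ≤ C₁ * (1+‖ξ‖)^m * (R^(-(N+|m|)) * (1+‖η‖)^(-((n:ℝ)+1))) := by
            have hmono : (1+‖η‖)^(-(N+|m|)) ≤ R^(-(N+|m|)) :=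
              Real.rpow_le_rpow_of_nonpos hRpos (by linarith [norm_nonneg η])
                (by linarith [abs_nonneg m, hN.le])
            have := mul_le_mul_of_nonneg_right hmono
              (Real.rpow_nonneg (show (0:ℝ) ≤ 1+‖η‖ by positivity) (-((n:ℝ)+1)))
            exact mul_le_mul_of_nonneg_left this (mul_nonneg hC₁nn hcξnn)
        _ = c * (1+‖η‖)^(-((n:ℝ)+1)) := by rw [hcdef]; ring
  have hkey : ‖∫ η : En n, Complex.exp (Complex.I * Complex.ofReal ⟪x, η⟫) * b η ξ *
        Complex.ofReal (φ ((2 : ℝ) ^ (-(k : ℤ)) • (ξ + η)) - φ ((2 : ℝ) ^ (-(k : ℤ)) • ξ))‖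
      ≤ c * I := by
    have := norm_integral_le_of_norm_le (hI.const_mul c)
      (Filter.Eventually.of_forall hpt)
    rwa [integral_const_mul] at this
  have hnorm : ‖rhoK φ b k x ξ‖ = (((2*Real.pi)^n)⁻¹ : ℝ) *
      ‖∫ η : En n, Complex.exp (Complex.I * Complex.ofReal ⟪x, η⟫) * b η ξ *
        Complex.ofReal (φ ((2 : ℝ) ^ (-(k : ℤ)) • (ξ + η)) - φ ((2 : ℝ) ^ (-(k : ℤ)) • ξ))‖ := by
    rw [rhoK, norm_mul, Complex.norm_real, Real.norm_eq_abs, _root_.abs_of_nonneg hPnn]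
  rw [hnorm]
  have hstep : (((2*Real.pi)^n)⁻¹ : ℝ) *
      ‖∫ η : En n, Complex.exp (Complex.I * Complex.ofReal ⟪x, η⟫) * b η ξ *
        Complex.ofReal (φ ((2 : ℝ) ^ (-(k : ℤ)) • (ξ + η)) - φ ((2 : ℝ) ^ (-(k : ℤ)) • ξ))‖
      ≤ (((2*Real.pi)^n)⁻¹ : ℝ) * (c * I) :=
    mul_le_mul_of_nonneg_left hkey hPnn
  refine hstep.trans ?_
  -- rewrite R^(-(N+|m|)) = (40/19)^(N+|m|) * B^(-(N+|m|))
  have hRsplit : R^(-(N+|m|)) = (40/19:ℝ)^(N+|m|) * B^(-(N+|m|)) := by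
    rw [hRdef, Real.mul_rpow (by norm_num) hBpos.le]
    congr 1
    rw [Real.rpow_neg (by norm_num), ← Real.inv_rpow (by norm_num)]
    norm_num
  have hBsnn : (0:ℝ) ≤ B^(-(N+|m|)) := Real.rpow_nonneg hBpos.le _
  have hmain : (1+‖ξ‖)^m * B^(-(N+|m|)) ≤ (2:ℝ)^(-(N*(k:ℝ))) := by
    have h1ξ : (1:ℝ) ≤ 1+‖ξ‖ := by linarith [norm_nonneg ξ]
    have h2ξ : 1+‖ξ‖ ≤ B := by linarith
    have hstep1 : (1+‖ξ‖)^m ≤ (1+‖ξ‖)^|m| :=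
      Real.rpow_le_rpow_of_exponent_le h1ξ (le_abs_self m)
    have hstep2 : (1+‖ξ‖)^|m| ≤ B^|m| :=
      Real.rpow_le_rpow (by positivity) h2ξ (abs_nonneg m)
    have hprod : (1+‖ξ‖)^m * B^(-(N+|m|)) ≤ B^|m| * B^(-(N+|m|)) :=
      mul_le_mul_of_nonneg_right (hstep1.trans hstep2) hBsnn
    have heq : B^|m| * B^(-(N+|m|)) = (2:ℝ)^(-(N*(k:ℝ))) := by
      rw [← Real.rpow_add hBpos, hBdef, ← Real.rpow_mul (by norm_num : (0:ℝ) ≤ 2)]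
      congr 1
      ring
    linarith
  calc (((2*Real.pi)^n)⁻¹ : ℝ) * (c * I)
      = ((((2*Real.pi)^n)⁻¹ : ℝ) * C₁ * I * (40/19:ℝ)^(N+|m|)) *
        ((1+‖ξ‖)^m * B^(-(N+|m|))) := by
        rw [hcdef, hRsplit]; ring
    _ ≤ ((((2*Real.pi)^n)⁻¹ : ℝ) * C₁ * I * (40/19:ℝ)^(N+|m|)) *
        (2:ℝ)^(-(N*(k:ℝ))) := by
        exact mul_le_mul_of_nonneg_left hmain
          (mul_nonneg (mul_nonneg (mul_nonneg hPnn hC₁nn) hInn) h4019)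
end
end

section
/- Let 1 < q, r < ∞ satisfy 1/r + 1/q > 1. There is a constant C, depending only on n, q, r and φ, such that for all Schwartz functions V, w on ℝ^n, every integer k ≥ 1, and every pair (i,j) ∈ HH(k): ‖ P_k(P_i V · P_j w) ‖_r ≤ C · 2^{nk(1 − 1/r)} · 2^{nj(1/r − 1 + 1/q)} · ‖V‖_q · ‖P_j w‖_r. -/
noncomputable section

open MeasureTheory Complex
open scoped ENNReal RealInnerProductSpace

namespace HHaux
open scoped FourierTransform
variable {n : ℕ}

lemma lint_sub_right (F : En n → ℝ≥0∞) (y : En n) :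
    ∫⁻ x, F (x - y) = ∫⁻ x, F x := by
  simpa [sub_eq_add_neg] using lintegral_add_right_eq_self F (-y)

lemma lint_sub_left {F : En n → ℝ≥0∞} (hF : Measurable F) (x : En n) :
    ∫⁻ y, F (x - y) = ∫⁻ y, F y :=
  (Measure.measurePreserving_sub_left volume x).lintegral_comp hF

lemma tonelli_conv {F G : En n → ℝ≥0∞} (hF : Measurable F) (hG : Measurable G) :
    ∫⁻ x, ∫⁻ y, G y * F (x - y) = (∫⁻ y, G y) * ∫⁻ x, F x := by
  rw [lintegral_lintegral_swap]
  · have h1 : ∀ y, ∫⁻ x, G y * F (x - y) = G y * ∫⁻ x, F x := by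
      intro y
      have hm : Measurable fun x : En n => F (x - y) := hF.comp (measurable_id.sub_const y)
      rw [lintegral_const_mul _ hm, lint_sub_right]
    simp_rw [h1]
    rw [lintegral_mul_const _ hG]
  · exact ((hG.comp measurable_snd).mul
      (hF.comp (measurable_fst.sub measurable_snd))).aemeasurable

lemma young_core {F G : En n → ℝ≥0∞} (hF : Measurable F) (hG : Measurable G)
    {p : ℝ} (hp : 1 ≤ p) :
    ∫⁻ x, (∫⁻ y, G y * F (x - y)) ^ p ≤ (∫⁻ y, G y) ^ p * ∫⁻ x, F x ^ p := by
  rcases eq_or_lt_of_le hp with hp1 | hp1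
  · simp only [← hp1, ENNReal.rpow_one]
    exact le_of_eq (tonelli_conv hF hG)
  have hp0 : 0 < p := lt_trans one_pos hp1
  set p' := p.conjExponent with hp'def
  have hc : p.HolderConjugate p' := Real.HolderConjugate.conjExponent hp1
  have hp'0 : 0 < p' := hc.symm.pos
  have hFp : Measurable fun x : En n => F x ^ p := hF.pow_const p
  have key : ∀ x : En n, (∫⁻ y, G y * F (x - y)) ≤
      (∫⁻ y, G y * F (x - y) ^ p) ^ (1/p) * (∫⁻ y, G y) ^ (1/p') := by
    intro x
    have hmF : Measurable fun y : En n => F (x - y) :=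
      hF.comp (measurable_const.sub measurable_id)
    have H := ENNReal.lintegral_mul_le_Lp_mul_Lq volume hc
      (f := fun y => (G y * F (x - y) ^ p) ^ (1/p)) (g := fun y => G y ^ (1/p'))
      ((hG.mul (hmF.pow_const p)).pow_const _).aemeasurable
      (hG.pow_const _).aemeasurable
    have e1 : ∀ y : En n, ((G y * F (x - y) ^ p) ^ (1/p) * G y ^ (1/p'))
        = G y * F (x - y) := by
      intro y
      rw [ENNReal.mul_rpow_of_nonneg _ _ (by positivity : (0:ℝ) ≤ 1/p),
        ← ENNReal.rpow_mul (F (x - y)), mul_one_div_cancel hp0.ne', ENNReal.rpow_one,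
        mul_comm (G y ^ (1/p)) (F (x - y)), mul_assoc,
        ← ENNReal.rpow_add_of_nonneg _ _ (by positivity) (by positivity)]
      rw [show 1/p + 1/p' = 1 by
        simpa [one_div] using hc.inv_add_inv_eq_one]
      rw [ENNReal.rpow_one, mul_comm]
    have e2 : ∀ y : En n, ((G y * F (x - y) ^ p) ^ (1/p)) ^ p = G y * F (x - y) ^ p := by
      intro y
      rw [← ENNReal.rpow_mul, one_div_mul_cancel hp0.ne', ENNReal.rpow_one]
    have e3 : ∀ y : En n, (G y ^ (1/p')) ^ p' = G y := by
      intro y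
      rw [← ENNReal.rpow_mul, one_div_mul_cancel hp'0.ne', ENNReal.rpow_one]
    calc ∫⁻ y, G y * F (x - y)
        = ∫⁻ y, ((fun y => (G y * F (x - y) ^ p) ^ (1/p)) * fun y => G y ^ (1/p')) y := by
          refine lintegral_congr fun y => ?_
          simp only [Pi.mul_apply]
          rw [e1]
      _ ≤ (∫⁻ y, ((G y * F (x - y) ^ p) ^ (1/p)) ^ p) ^ (1/p)
          * (∫⁻ y, (G y ^ (1/p')) ^ p') ^ (1/p') := H
      _ = (∫⁻ y, G y * F (x - y) ^ p) ^ (1/p) * (∫⁻ y, G y) ^ (1/p') := by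
          rw [lintegral_congr e2, lintegral_congr e3]
  have hmeasJ : Measurable fun x : En n => ∫⁻ y, G y * F (x - y) ^ p := by
    apply Measurable.lintegral_prod_right
    exact (hG.comp measurable_snd).mul
      ((hF.comp (measurable_fst.sub measurable_snd)).pow_const p)
  have hpp' : p / p' = p - 1 := by
    rw [hp'def, Real.conjExponent]
    field_simp
  calc ∫⁻ x, (∫⁻ y, G y * F (x - y)) ^ p
      ≤ ∫⁻ x, ((∫⁻ y, G y * F (x - y) ^ p) ^ (1/p) * (∫⁻ y, G y) ^ (1/p')) ^ p :=
        lintegral_mono fun x => ENNReal.rpow_le_rpow (key x) hp0.le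
    _ = ∫⁻ x, (∫⁻ y, G y * F (x - y) ^ p) * (∫⁻ y, G y) ^ (p/p') := by
        refine lintegral_congr fun x => ?_
        rw [ENNReal.mul_rpow_of_nonneg _ _ hp0.le, ← ENNReal.rpow_mul, ← ENNReal.rpow_mul,
          one_div_mul_cancel hp0.ne', ENNReal.rpow_one]
        congr 1
        field_simp
    _ = ((∫⁻ y, G y) * ∫⁻ x, F x ^ p) * (∫⁻ y, G y) ^ (p/p') := by
        rw [lintegral_mul_const _ hmeasJ, tonelli_conv hFp hG]
    _ = (∫⁻ y, G y) ^ p * ∫⁻ x, F x ^ p := by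
        have hKp : (∫⁻ y, G y) ^ p = (∫⁻ y, G y) * (∫⁻ y, G y) ^ (p - 1) := by
          have h1 : (∫⁻ y, G y) ^ p = (∫⁻ y, G y) ^ (1 + (p - 1)) := by congr 1; ring
          rw [h1, ENNReal.rpow_add_of_nonneg _ _ zero_le_one (by linarith),
            ENNReal.rpow_one]
        rw [hpp', hKp]
        ring


lemma enorm_conv_le (f g : En n → ℂ) (x : En n) :
    (‖∫ y, g y * f (x - y)‖₊ : ℝ≥0∞) ≤ ∫⁻ y, (‖g y‖₊ : ℝ≥0∞) * (‖f (x - y)‖₊ : ℝ≥0∞) := by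
  refine le_trans (enorm_integral_le_lintegral_enorm _) (lintegral_mono fun y => ?_)
  show (‖g y * f (x - y)‖₊ : ℝ≥0∞) ≤ _
  rw [nnnorm_mul, ENNReal.coe_mul]

lemma ofReal_ne_zero_of_lt {p : ℝ} (hp : 0 < p) : ENNReal.ofReal p ≠ 0 := by
  simp only [ne_eq, ENNReal.ofReal_eq_zero, not_le]
  exact hp

lemma conv_L1_Lp {f g : En n → ℂ} (hf : Measurable f) (hg : Measurable g)
    {p : ℝ} (hp : 1 ≤ p) :
    eLpNorm (fun x => ∫ y, g y * f (x - y)) (ENNReal.ofReal p) volume ≤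
      eLpNorm g 1 volume * eLpNorm f (ENNReal.ofReal p) volume := by
  have hp0 : 0 < p := lt_of_lt_of_le one_pos hp
  rw [eLpNorm_eq_lintegral_rpow_enorm_toReal (ofReal_ne_zero_of_lt hp0) ENNReal.ofReal_ne_top,
    eLpNorm_eq_lintegral_rpow_enorm_toReal (ofReal_ne_zero_of_lt hp0) ENNReal.ofReal_ne_top,
    eLpNorm_one_eq_lintegral_enorm, ENNReal.toReal_ofReal hp0.le]
  calc (∫⁻ x, (‖∫ y, g y * f (x - y)‖₊ : ℝ≥0∞) ^ p) ^ (1/p)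
      ≤ (∫⁻ x, (∫⁻ y, (‖g y‖₊ : ℝ≥0∞) * (‖f (x - y)‖₊ : ℝ≥0∞)) ^ p) ^ (1/p) := by
        gcongr with x
        exact enorm_conv_le f g x
    _ ≤ ((∫⁻ y, (‖g y‖₊ : ℝ≥0∞)) ^ p * ∫⁻ x, (‖f x‖₊ : ℝ≥0∞) ^ p) ^ (1/p) := by
        gcongr
        exact young_core hf.enorm hg.enorm hp
    _ = (∫⁻ y, (‖g y‖₊ : ℝ≥0∞)) * (∫⁻ x, (‖f x‖₊ : ℝ≥0∞) ^ p) ^ (1/p) := by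
        rw [ENNReal.mul_rpow_of_nonneg _ _ (by positivity), ← ENNReal.rpow_mul,
          mul_one_div_cancel hp0.ne', ENNReal.rpow_one]

lemma inner_swap {f g : En n → ℂ} (hf : Measurable f) (hg : Measurable g) (x : En n) :
    ∫⁻ y, (‖g y‖₊ : ℝ≥0∞) * (‖f (x - y)‖₊ : ℝ≥0∞)
      = ∫⁻ y, (‖f y‖₊ : ℝ≥0∞) * (‖g (x - y)‖₊ : ℝ≥0∞) := by
  have hm : Measurable fun t : En n => (‖g t‖₊ : ℝ≥0∞) * (‖f (x - t)‖₊ : ℝ≥0∞) :=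
    hg.enorm.mul ((hf.comp (measurable_const.sub measurable_id)).enorm)
  have := lint_sub_left hm x
  simp only [sub_sub_cancel] at this
  rw [← this]
  exact lintegral_congr fun y => mul_comm _ _

lemma conv_Lp_L1 {f g : En n → ℂ} (hf : Measurable f) (hg : Measurable g)
    {p : ℝ} (hp : 1 ≤ p) :
    eLpNorm (fun x => ∫ y, g y * f (x - y)) (ENNReal.ofReal p) volume ≤
      eLpNorm g (ENNReal.ofReal p) volume * eLpNorm f 1 volume := by
  have hp0 : 0 < p := lt_of_lt_of_le one_pos hp
  rw [eLpNorm_eq_lintegral_rpow_enorm_toReal (ofReal_ne_zero_of_lt hp0) ENNReal.ofReal_ne_top,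
    eLpNorm_eq_lintegral_rpow_enorm_toReal (ofReal_ne_zero_of_lt hp0) ENNReal.ofReal_ne_top,
    eLpNorm_one_eq_lintegral_enorm, ENNReal.toReal_ofReal hp0.le]
  calc (∫⁻ x, (‖∫ y, g y * f (x - y)‖₊ : ℝ≥0∞) ^ p) ^ (1/p)
      ≤ (∫⁻ x, (∫⁻ y, (‖f y‖₊ : ℝ≥0∞) * (‖g (x - y)‖₊ : ℝ≥0∞)) ^ p) ^ (1/p) := by
        gcongr with x
        rw [← inner_swap hf hg x]
        exact enorm_conv_le f g x
    _ ≤ ((∫⁻ y, (‖f y‖₊ : ℝ≥0∞)) ^ p * ∫⁻ x, (‖g x‖₊ : ℝ≥0∞) ^ p) ^ (1/p) := by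
        gcongr
        exact young_core hg.enorm hf.enorm hp
    _ = (∫⁻ x, (‖g x‖₊ : ℝ≥0∞) ^ p) ^ (1/p) * (∫⁻ y, (‖f y‖₊ : ℝ≥0∞)) := by
        rw [ENNReal.mul_rpow_of_nonneg _ _ (by positivity), ← ENNReal.rpow_mul,
          mul_one_div_cancel hp0.ne', ENNReal.rpow_one, mul_comm]

lemma conv_pointwise {f g : En n → ℂ} (hf : Measurable f) (hg : Measurable g)
    {p p' : ℝ} (hc : p.HolderConjugate p') (x : En n) :
    (‖∫ y, g y * f (x - y)‖₊ : ℝ≥0∞) ≤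
      eLpNorm g (ENNReal.ofReal p) volume * eLpNorm f (ENNReal.ofReal p') volume := by
  refine (enorm_conv_le f g x).trans ?_
  have hG : AEMeasurable (fun y : En n => (‖g y‖₊ : ℝ≥0∞)) volume := hg.enorm.aemeasurable
  have hF : AEMeasurable (fun y : En n => (‖f (x - y)‖₊ : ℝ≥0∞)) volume :=
    ((hf.comp (measurable_const.sub measurable_id)).enorm).aemeasurable
  refine (ENNReal.lintegral_mul_le_Lp_mul_Lq volume hc hG hF).trans ?_
  have hsub : ∫⁻ y, (‖f (x - y)‖₊ : ℝ≥0∞) ^ p' = ∫⁻ y, (‖f y‖₊ : ℝ≥0∞) ^ p' :=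
    lint_sub_left (hf.enorm.pow_const p') x
  rw [hsub, eLpNorm_eq_lintegral_rpow_enorm_toReal (ofReal_ne_zero_of_lt hc.pos)
      ENNReal.ofReal_ne_top,
    eLpNorm_eq_lintegral_rpow_enorm_toReal (ofReal_ne_zero_of_lt hc.symm.pos) ENNReal.ofReal_ne_top,
    ENNReal.toReal_ofReal hc.pos.le, ENNReal.toReal_ofReal hc.symm.pos.le]
  exact le_rfl

lemma conv_top {f g : En n → ℂ} (hf : Measurable f) (hg : Measurable g)
    {p p' : ℝ} (hc : p.HolderConjugate p') :
    eLpNorm (fun x => ∫ y, g y * f (x - y)) ⊤ volume ≤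
      eLpNorm g (ENNReal.ofReal p) volume * eLpNorm f (ENNReal.ofReal p') volume := by
  rw [eLpNorm_exponent_top, eLpNormEssSup]
  exact essSup_le_of_ae_le _ (Filter.Eventually.of_forall fun x => conv_pointwise hf hg hc x)

lemma interp {h : En n → ℂ} (hm : AEStronglyMeasurable h volume) {a b : ℝ}
    (ha : 0 < a) (hab : a ≤ b) :
    eLpNorm h (ENNReal.ofReal b) volume ≤
      eLpNorm h ⊤ volume ^ (1 - a/b) * eLpNorm h (ENNReal.ofReal a) volume ^ (a/b) := by
  rcases eq_or_lt_of_le hab with rfl | hab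
  · simp [div_self ha.ne']
  have hb : 0 < b := ha.trans hab
  have hab' : a / b < 1 := (div_lt_one hb).2 hab
  have hab0 : 0 ≤ a / b := by positivity
  by_cases h0 : eLpNorm h (ENNReal.ofReal a) volume = 0
  · have hz : h =ᵐ[volume] 0 := (eLpNorm_eq_zero_iff hm (ofReal_ne_zero_of_lt ha)).1 h0
    rw [eLpNorm_congr_ae hz, eLpNorm_zero]
    exact zero_le
  rw [eLpNorm_exponent_top]
  by_cases hE : eLpNormEssSup h volume = ⊤
  · have hne : (eLpNorm h (ENNReal.ofReal a) volume) ^ (a/b) ≠ 0 := by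
      intro hzero
      rcases ENNReal.rpow_eq_zero_iff.1 hzero with ⟨h1, _⟩ | ⟨_, h2⟩
      · exact h0 h1
      · linarith
    rw [hE, ENNReal.top_rpow_of_pos (by linarith), ENNReal.top_mul hne]
    exact le_top
  · rw [eLpNorm_eq_lintegral_rpow_enorm_toReal (ofReal_ne_zero_of_lt hb) ENNReal.ofReal_ne_top,
      eLpNorm_eq_lintegral_rpow_enorm_toReal (ofReal_ne_zero_of_lt ha) ENNReal.ofReal_ne_top,
      ENNReal.toReal_ofReal hb.le, ENNReal.toReal_ofReal ha.le]
    set E := eLpNormEssSup h volume with hEdef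
    have key : ∫⁻ x, (‖h x‖₊ : ℝ≥0∞) ^ b ≤ E ^ (b - a) * ∫⁻ x, (‖h x‖₊ : ℝ≥0∞) ^ a := by
      rw [← lintegral_const_mul' _ _ (ENNReal.rpow_ne_top_of_nonneg (by linarith) hE)]
      refine lintegral_mono_ae ?_
      filter_upwards [ae_le_eLpNormEssSup (f := h)] with x hx
      have e1 : (‖h x‖₊ : ℝ≥0∞) ^ b = (‖h x‖₊ : ℝ≥0∞) ^ (b - a) * (‖h x‖₊ : ℝ≥0∞) ^ a := by
        rw [← ENNReal.rpow_add_of_nonneg _ _ (by linarith) ha.le, sub_add_cancel]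
      rw [e1]
      exact mul_le_mul_left (ENNReal.rpow_le_rpow hx (by linarith)) _
    calc (∫⁻ x, (‖h x‖₊ : ℝ≥0∞) ^ b) ^ (1/b)
        ≤ (E ^ (b - a) * ∫⁻ x, (‖h x‖₊ : ℝ≥0∞) ^ a) ^ (1/b) :=
          ENNReal.rpow_le_rpow key (by positivity)
      _ = E ^ (1 - a/b) * ((∫⁻ x, (‖h x‖₊ : ℝ≥0∞) ^ a) ^ (1/a)) ^ (a/b) := by
          rw [ENNReal.mul_rpow_of_nonneg _ _ (by positivity), ← ENNReal.rpow_mul,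
            ← ENNReal.rpow_mul]
          congr 1
          · congr 1
            field_simp
          · congr 1
            field_simp

lemma lint_comp_smul {H : En n → ℝ≥0∞} (hH : Measurable H) {c : ℝ} (hc : c ≠ 0) :
    ∫⁻ z, H (c • z) = ENNReal.ofReal |(c ^ n)⁻¹| * ∫⁻ z, H z := by
  have hm : Measurable fun z : En n => c • z := measurable_id.const_smul c
  rw [← lintegral_map hH hm, Measure.map_addHaar_smul volume hc, lintegral_smul_measure]
  congr 2
  rw [finrank_euclideanSpace_fin]


/-- a Schwartz function is in every `L^p`, `1 ≤ p < ∞`. -/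
lemma schwartz_memLp (f : SchwartzMap (En n) ℂ) {p : ℝ} (hp : 1 ≤ p) :
    MemLp (⇑f) (ENNReal.ofReal p) volume := by
  have hp0 : 0 < p := lt_of_lt_of_le one_pos hp
  obtain ⟨C, hC0, hC⟩ : ∃ C : ℝ, 0 ≤ C ∧ ∀ x : En n, (1 + ‖x‖) ^ (n + 1) * ‖f x‖ ≤ C := by
    refine ⟨2 ^ (n+1) * ((Finset.Iic ((n+1), 0)).sup fun m =>
      SchwartzMap.seminorm ℝ m.1 m.2) f, by positivity, fun x => ?_⟩
    have := SchwartzMap.one_add_le_sup_seminorm_apply (𝕜 := ℝ) (m := (n+1, 0))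
      le_rfl le_rfl f x
    rwa [norm_iteratedFDeriv_zero] at this
  refine ⟨f.continuous.aestronglyMeasurable, ?_⟩
  rw [eLpNorm_eq_lintegral_rpow_enorm_toReal (ofReal_ne_zero_of_lt hp0) ENNReal.ofReal_ne_top,
    ENNReal.toReal_ofReal hp0.le]
  refine ENNReal.rpow_lt_top_of_nonneg (by positivity) (ne_of_lt ?_)
  have hint : Integrable (fun x : En n => C ^ p * (1 + ‖x‖) ^ (-(((n : ℝ) + 1) * p))) volume := by
    refine Integrable.const_mul ?_ _
    refine integrable_one_add_norm ?_
    rw [finrank_euclideanSpace_fin]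
    nlinarith [hp0]
  have hb : ∀ x : En n, (‖f x‖₊ : ℝ≥0∞) ^ p ≤
      ENNReal.ofReal (C ^ p * (1 + ‖x‖) ^ (-(((n : ℝ) + 1) * p))) := by
    intro x
    have hpos : (0:ℝ) < 1 + ‖x‖ := by positivity
    have hpow : (0:ℝ) < (1 + ‖x‖) ^ (((n : ℝ) + 1)) := Real.rpow_pos_of_pos hpos _
    have h1 : ‖f x‖ ≤ C * (1 + ‖x‖) ^ (-((n : ℝ) + 1)) := by
      rw [Real.rpow_neg hpos.le, mul_comm C, ← div_eq_inv_mul, le_div_iff₀ hpow]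
      calc ‖f x‖ * (1 + ‖x‖) ^ ((n : ℝ) + 1) = (1 + ‖x‖) ^ (n + 1) * ‖f x‖ := by
            rw [mul_comm]
            congr 1
            rw [← Real.rpow_natCast (1 + ‖x‖) (n + 1)]
            congr 1
            push_cast
            ring
        _ ≤ C := hC x
    calc (‖f x‖₊ : ℝ≥0∞) ^ p = ENNReal.ofReal (‖f x‖ ^ p) := by
          rw [← enorm_eq_nnnorm, ← ofReal_norm, ← ENNReal.ofReal_rpow_of_nonneg (norm_nonneg _) hp0.le]
      _ ≤ _ := by
          refine ENNReal.ofReal_le_ofReal ?_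
          calc ‖f x‖ ^ p ≤ (C * (1 + ‖x‖) ^ (-((n : ℝ) + 1))) ^ p :=
                Real.rpow_le_rpow (norm_nonneg _) h1 hp0.le
            _ = C ^ p * (1 + ‖x‖) ^ (-(((n : ℝ) + 1) * p)) := by
                rw [Real.mul_rpow hC0 (Real.rpow_nonneg hpos.le _),
                  ← Real.rpow_mul hpos.le]
                congr 2
                ring
  calc ∫⁻ x, (‖f x‖₊ : ℝ≥0∞) ^ p ≤
        ∫⁻ x : En n, ENNReal.ofReal (C ^ p * (1 + ‖x‖) ^ (-(((n : ℝ) + 1) * p))) :=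
        lintegral_mono hb
    _ < ⊤ := hint.lintegral_lt_top

/-- eLpNorm of a dilation. -/
lemma eLpNorm_comp_smul {g : En n → ℂ} (hg : Measurable g) {c : ℝ} (hc : c ≠ 0)
    {p : ℝ} (hp : 1 ≤ p) :
    eLpNorm (fun z => g (c • z)) (ENNReal.ofReal p) volume
      = ENNReal.ofReal (|(c ^ n)⁻¹| ^ (1/p)) * eLpNorm g (ENNReal.ofReal p) volume := by
  have hp0 : 0 < p := lt_of_lt_of_le one_pos hp
  rw [eLpNorm_eq_lintegral_rpow_enorm_toReal (ofReal_ne_zero_of_lt hp0) ENNReal.ofReal_ne_top,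
    eLpNorm_eq_lintegral_rpow_enorm_toReal (ofReal_ne_zero_of_lt hp0) ENNReal.ofReal_ne_top,
    ENNReal.toReal_ofReal hp0.le]
  have : ∫⁻ z : En n, (‖g (c • z)‖₊ : ℝ≥0∞) ^ p
      = ENNReal.ofReal |(c ^ n)⁻¹| * ∫⁻ z, (‖g z‖₊ : ℝ≥0∞) ^ p :=
    lint_comp_smul (hg.enorm.pow_const p) hc
  simp only [enorm_eq_nnnorm]
  rw [this, ENNReal.mul_rpow_of_nonneg _ _ (by positivity),
    ← ENNReal.ofReal_rpow_of_nonneg (abs_nonneg _) (by positivity)]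


lemma lpker_scale (φ : En n → ℝ) (j : ℤ) (z : En n) :
    LPker φ j z = ((2:ℝ) ^ (j * (n:ℤ))) • LPker φ 0 ((2:ℝ) ^ j • z) := by
  unfold LPker
  have h2 := MeasureTheory.Measure.integral_comp_smul (μ := volume)
    (f := fun η : En n => Complex.exp (Complex.I * Complex.ofReal ⟪(2:ℝ)^j • z, η⟫) *
      Complex.ofReal (φ ((2:ℝ) ^ (-(0:ℤ)) • η))) ((2:ℝ)^(-j))
  have h1 : ∀ ξ : En n, Complex.exp (Complex.I * Complex.ofReal ⟪z, ξ⟫) *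
      Complex.ofReal (φ ((2:ℝ) ^ (-j) • ξ))
      = Complex.exp (Complex.I * Complex.ofReal ⟪(2:ℝ)^j • z, (2:ℝ)^(-j) • ξ⟫) *
        Complex.ofReal (φ ((2:ℝ) ^ (-(0:ℤ)) • ((2:ℝ)^(-j) • ξ))) := by
    intro ξ
    simp only [neg_zero, zpow_zero, one_smul]
    congr 3
    rw [real_inner_smul_left, real_inner_smul_right, ← mul_assoc,
      ← zpow_add₀ (two_ne_zero (α := ℝ)), add_neg_cancel, zpow_zero, one_mul]
  simp_rw [h1]
  rw [h2]
  have hs : |(((2:ℝ)^(-j)) ^ (Module.finrank ℝ (En n)))⁻¹| = (2:ℝ) ^ (j * (n:ℤ)) := by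
    rw [finrank_euclideanSpace_fin, ← zpow_natCast ((2:ℝ)^(-j)) n, ← zpow_mul,
      ← zpow_neg, neg_mul, neg_neg]
    exact abs_of_pos (zpow_pos two_pos _)
  rw [hs]
  rw [Complex.real_smul, Complex.real_smul]
  push_cast
  ring

lemma exists_schwartz_rep (φ : En n → ℝ) (hφ : LPfamily φ) :
    ∃ S : SchwartzMap (En n) ℂ, ∀ z, LPker φ 0 z
      = (((2 * Real.pi) ^ n)⁻¹ : ℝ) • S ((-(2 * Real.pi)⁻¹ : ℝ) • z) := by
  have hsm : ContDiff ℝ (⊤ : ℕ∞) (fun ξ : En n => (φ ξ : ℂ)) :=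
    Complex.ofRealCLM.contDiff.comp hφ.1
  have hsupp : HasCompactSupport (fun ξ : En n => (φ ξ : ℂ)) := by
    refine HasCompactSupport.intro (isCompact_closedBall (0 : En n) (5/3)) ?_
    intro ξ hξ
    simp only [Metric.mem_closedBall, dist_zero_right, not_le] at hξ
    by_contra hne
    have hφne : φ ξ ≠ 0 := fun h => hne (by simp [h])
    have := (hφ.2.2.1 ξ hφne).2
    linarith
  let Sφ : SchwartzMap (En n) ℂ :=
    { toFun := fun ξ => (φ ξ : ℂ)
      smooth' := hsm.of_le (by simp)
      decay' := by
        intro k m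
        have h1 : Continuous fun x : En n =>
            ‖x‖ ^ k * ‖iteratedFDeriv ℝ m (fun ξ : En n => (φ ξ : ℂ)) x‖ :=
          ((continuous_norm.pow k).mul
            ((hsm.continuous_iteratedFDeriv (by exact_mod_cast le_top)).norm))
        have h2 : HasCompactSupport fun x : En n =>
            ‖x‖ ^ k * ‖iteratedFDeriv ℝ m (fun ξ : En n => (φ ξ : ℂ)) x‖ :=
          ((hsupp.iteratedFDeriv m).norm).mul_left
        obtain ⟨C, hC⟩ := h1.bounded_above_of_compact_support h2
        exact ⟨C, fun x => (le_abs_self _).trans ((Real.norm_eq_abs _) ▸ hC x)⟩ }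
  refine ⟨SchwartzMap.fourierTransformCLM ℝ Sφ, fun z => ?_⟩
  rw [SchwartzMap.fourierTransformCLM_apply, SchwartzMap.fourier_coe, Real.fourier_eq']
  unfold LPker
  rw [Complex.real_smul]
  simp only [neg_zero, zpow_zero, one_smul]
  congr 1
  refine integral_congr_ae (Filter.Eventually.of_forall fun v => ?_)
  have ha : -2 * Real.pi * ⟪v, ((-(2 * Real.pi)⁻¹ : ℝ)) • z⟫ = ⟪z, v⟫ := by
    rw [real_inner_smul_right, real_inner_comm]
    have hpi : Real.pi ≠ 0 := Real.pi_ne_zero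
    field_simp
  show cexp (Complex.I * Complex.ofReal (inner ℝ z v)) * Complex.ofReal (φ v)
      = cexp (Complex.ofReal (-2 * Real.pi * inner ℝ v ((-(2 * Real.pi)⁻¹ : ℝ) • z)) * Complex.I)
        • Sφ v
  rw [ha, smul_eq_mul, mul_comm Complex.I]
  rfl


section Rep
variable {φ : En n → ℝ} {S : SchwartzMap (En n) ℂ}
  (hrep : ∀ z, LPker φ 0 z
    = (((2 * Real.pi) ^ n)⁻¹ : ℝ) • S ((-(2 * Real.pi)⁻¹ : ℝ) • z))

include hrep

lemma psi0_cont : Continuous (LPker φ 0) := by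
  have : LPker φ 0 = fun z => (((2 * Real.pi) ^ n)⁻¹ : ℝ) •
      S ((-(2 * Real.pi)⁻¹ : ℝ) • z) := funext hrep
  rw [this]
  exact (S.continuous.comp (continuous_const_smul ((-(2 * Real.pi)⁻¹ : ℝ)))).const_smul (((2 * Real.pi) ^ n)⁻¹ : ℝ)

lemma psi_cont (j : ℤ) : Continuous (LPker φ j) := by
  have : LPker φ j = fun z =>
      ((2:ℝ) ^ (j * (n:ℤ))) • LPker φ 0 ((2:ℝ) ^ j • z) := funext (lpker_scale φ j)
  rw [this]
  exact ((psi0_cont hrep).comp (continuous_const_smul ((2:ℝ) ^ j))).const_smul ((2:ℝ) ^ (j * (n:ℤ)))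

lemma psi_bdd (j : ℤ) : BddAbove (Set.range fun x : En n => ‖LPker φ j x‖) := by
  refine ⟨(2:ℝ) ^ (j * (n:ℤ)) * (|(((2 * Real.pi) ^ n)⁻¹ : ℝ)| *
    (SchwartzMap.seminorm ℝ 0 0) S), ?_⟩
  rintro _ ⟨z, rfl⟩
  show ‖LPker φ j z‖ ≤ _
  have h2 : (0:ℝ) < (2:ℝ) ^ (j * (n:ℤ)) := zpow_pos two_pos _
  rw [lpker_scale φ j z, norm_smul, hrep, norm_smul, Real.norm_eq_abs, Real.norm_eq_abs,
    abs_of_pos h2]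
  gcongr
  exact S.norm_le_seminorm ℝ _

lemma psi0_memLp {p : ℝ} (hp : 1 ≤ p) :
    MemLp (LPker φ 0) (ENNReal.ofReal p) volume := by
  have hfun : LPker φ 0 = fun z => (((2 * Real.pi) ^ n)⁻¹ : ℝ) •
      S ((-(2 * Real.pi)⁻¹ : ℝ) • z) := funext hrep
  rw [hfun]
  refine MemLp.const_smul ?_ (((2 * Real.pi) ^ n)⁻¹ : ℝ)
  refine ⟨(S.continuous.comp (continuous_const_smul ((-(2 * Real.pi)⁻¹ : ℝ)))).aestronglyMeasurable, ?_⟩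
  have hpi : (0:ℝ) < 2 * Real.pi := by positivity
  rw [eLpNorm_comp_smul S.continuous.measurable (neg_ne_zero.2 (inv_ne_zero hpi.ne')) hp]
  exact ENNReal.mul_lt_top ENNReal.ofReal_lt_top (schwartz_memLp S hp).2

lemma psi_norm_bound (j : ℤ) {p : ℝ} (hp : 1 ≤ p) :
    eLpNorm (LPker φ j) (ENNReal.ofReal p) volume
      ≤ ENNReal.ofReal ((2:ℝ) ^ (((j:ℝ) * (n:ℝ)) * (1 - 1/p))) *
        eLpNorm (LPker φ 0) (ENNReal.ofReal p) volume := by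
  have hp0 : 0 < p := lt_of_lt_of_le one_pos hp
  have hfun : LPker φ j = fun z =>
      ((2:ℝ) ^ (j * (n:ℤ))) • LPker φ 0 ((2:ℝ) ^ j • z) := funext (lpker_scale φ j)
  rw [hfun]
  have hsmul : eLpNorm (fun z => ((2:ℝ) ^ (j * (n:ℤ))) •
      LPker φ 0 ((2:ℝ) ^ j • z)) (ENNReal.ofReal p) volume
      = (‖((2:ℝ) ^ (j * (n:ℤ)))‖₊ : ℝ≥0∞) *
        eLpNorm (fun z => LPker φ 0 ((2:ℝ) ^ j • z)) (ENNReal.ofReal p) volume := by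
    rw [← enorm_eq_nnnorm, ← eLpNorm_const_smul]
    rfl
  rw [hsmul, eLpNorm_comp_smul (psi0_cont hrep).measurable
    (by positivity : ((2:ℝ) ^ j) ≠ 0) hp, ← mul_assoc]
  gcongr
  -- coefficient inequality (equality in fact)
  have hT : (0:ℝ) < (2:ℝ) ^ (j * (n:ℤ)) := zpow_pos two_pos _
  have hcoe : (‖((2:ℝ) ^ (j * (n:ℤ)))‖₊ : ℝ≥0∞) = ENNReal.ofReal ((2:ℝ) ^ (j * (n:ℤ))) := by
    rw [← enorm_eq_nnnorm, ← ofReal_norm, Real.norm_eq_abs, abs_of_pos hT]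
  have habs : |((((2:ℝ) ^ j) ^ n)⁻¹)| = ((2:ℝ) ^ (j * (n:ℤ)))⁻¹ := by
    rw [← zpow_natCast ((2:ℝ)^j) n, ← zpow_mul]
    exact abs_of_pos (by positivity)
  have hreal : (2:ℝ) ^ (j * (n:ℤ)) * (((2:ℝ) ^ (j * (n:ℤ)))⁻¹) ^ (1/p)
      = (2:ℝ) ^ (((j:ℝ) * (n:ℝ)) * (1 - 1/p)) := by
    have hc : ((2:ℝ) ^ (j * (n:ℤ))) = (2:ℝ) ^ (((j * (n:ℤ) : ℤ) : ℝ)) :=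
      (Real.rpow_intCast 2 _).symm
    rw [hc, ← Real.rpow_neg (by norm_num : (0:ℝ) ≤ 2),
      ← Real.rpow_mul (by norm_num : (0:ℝ) ≤ 2), ← Real.rpow_add two_pos]
    congr 1
    push_cast
    ring
  rw [hcoe, habs, ← ENNReal.ofReal_mul hT.le, hreal]

end Rep

lemma lp_cont {n : ℕ} {φ : En n → ℝ} {S : SchwartzMap (En n) ℂ}
    (hrep : ∀ z, LPker φ 0 z
      = (((2 * Real.pi) ^ n)⁻¹ : ℝ) • S ((-(2 * Real.pi)⁻¹ : ℝ) • z))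
    {f : En n → ℂ} (hf : Integrable f volume) (m : ℤ) : Continuous (LP φ m f) := by
  have he : LP φ m f = convolution f (LPker φ m) (ContinuousLinearMap.mul ℝ ℂ) volume := rfl
  rw [he]
  exact (psi_bdd hrep m).continuous_convolution_right_of_integrable _ hf (psi_cont hrep m)


end HHaux

open HHaux in
/-- High-high interaction estimate in the case `1/r + 1/q > 1`:
for `(i,j) ∈ HH(k)`,
`‖P_k(P_iV · P_jw)‖_r ≤ C 2^{nk(1−1/r)} 2^{nj(1/r−1+1/q)} ‖V‖_q ‖P_j w‖_r`. -/
theorem HH_estimate_L1 (n : ℕ) (φ : En n → ℝ) (hφ : LPfamily φ)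
    (q r : ℝ) (hq1 : 1 < q) (hr1 : 1 < r) (hqr : 1 < 1 / r + 1 / q) :
    ∃ C : ℝ, 0 ≤ C ∧ ∀ (V w : SchwartzMap (En n) ℂ) (k : ℤ), 1 ≤ k →
      ∀ i j : ℤ, (i, j) ∈ HHzone k →
      eLpNorm (fun x => LP φ k (fun y => LP φ i ⇑V y * LP φ j ⇑w y) x)
          (ENNReal.ofReal r) volume ≤
        ENNReal.ofReal
            (C * (2 : ℝ) ^ ((n : ℝ) * (k : ℝ) * (1 - 1 / r)) *
              (2 : ℝ) ^ ((n : ℝ) * (j : ℝ) * (1 / r - 1 + 1 / q))) *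
          eLpNorm (⇑V) (ENNReal.ofReal q) volume *
          eLpNorm (LP φ j ⇑w) (ENNReal.ofReal r) volume := by
  obtain ⟨S, hrep⟩ := exists_schwartz_rep φ hφ
  have hq0 : 0 < q := lt_trans one_pos hq1
  have hr0 : 0 < r := lt_trans one_pos hr1
  have hrc : r.HolderConjugate r.conjExponent := Real.HolderConjugate.conjExponent hr1
  have hqc : q.HolderConjugate q.conjExponent := Real.HolderConjugate.conjExponent hq1
  set r' := r.conjExponent with hr'def
  set q' := q.conjExponent with hq'def
  have hr'0 : 0 < r' := hrc.symm.pos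
  have hq'0 : 0 < q' := hqc.symm.pos
  have hq'1 : 1 ≤ q' := hqc.symm.lt.le
  have hinvr : r⁻¹ + r'⁻¹ = 1 := hrc.inv_add_inv_eq_one
  have hinvq : q⁻¹ + q'⁻¹ = 1 := hqc.inv_add_inv_eq_one
  have hqr' : q < r' := by
    have h1 : (1:ℝ)/r' < 1/q := by
      rw [one_div, one_div]
      have h2 : r'⁻¹ = 1 - r⁻¹ := by linarith
      have h4 : 1 < r⁻¹ + q⁻¹ := by
        have := hqr
        rw [one_div, one_div] at this
        linarith
      rw [h2]
      linarith
    have e1 : q * (1/q) = 1 := by field_simp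
    have e2 : r' * (1/r') = 1 := by field_simp
    nlinarith [mul_pos hq0 hr'0]
  set θ := q / r' with hθdef
  have hθ0 : 0 ≤ θ := by positivity
  have hθ1 : θ ≤ 1 := by
    rw [hθdef, div_le_one hr'0]
    exact hqr'.le
  have h1θ0 : 0 ≤ 1 - θ := by linarith
  set c := 1 / r - 1 + 1 / q with hcdef
  have hc0 : 0 < c := by
    rw [hcdef]
    linarith
  have hqc' : (1/q) * (1 - θ) = c := by
    have h2 : (1:ℝ)/r' = 1 - 1/r := by rw [one_div, one_div]; linarith
    have h3 : (1:ℝ)/q * (1 - θ) = 1/q - 1/r' := by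
      rw [hθdef]
      field_simp
    rw [h3, h2, hcdef]
    ring
  set A1 := eLpNorm (LPker φ 0) (1 : ℝ≥0∞) volume with hA1def
  set Ar := eLpNorm (LPker φ 0) (ENNReal.ofReal r) volume with hArdef
  set Aq' := eLpNorm (LPker φ 0) (ENNReal.ofReal q') volume with hAq'def
  have hA1t : A1 ≠ ⊤ := by
    have hh := (psi0_memLp (S := S) hrep le_rfl).2.ne
    rwa [ENNReal.ofReal_one] at hh
  have hArt : Ar ≠ ⊤ := (psi0_memLp hrep hr1.le).2.ne
  have hAq't : Aq' ≠ ⊤ := (psi0_memLp hrep hq'1).2.ne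
  set D := Ar * Aq' ^ (1 - θ) * A1 ^ θ with hDdef
  have hDt : D ≠ ⊤ :=
    ENNReal.mul_ne_top (ENNReal.mul_ne_top hArt (ENNReal.rpow_ne_top_of_nonneg h1θ0 hAq't))
      (ENNReal.rpow_ne_top_of_nonneg hθ0 hA1t)
  refine ⟨D.toReal * 2 ^ (3 * (n:ℝ) * c),
    mul_nonneg ENNReal.toReal_nonneg (Real.rpow_nonneg (by norm_num) _), ?_⟩
  intro V w k hk i j hij
  obtain ⟨hik, hjk, hij3⟩ := hij
  have hijr : (i:ℝ) ≤ (j:ℝ) + 3 := by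
    have h2 := (abs_le.1 hij3).2
    have h3 : ((i - j : ℤ) : ℝ) ≤ 3 := by exact_mod_cast h2
    push_cast at h3
    linarith
  have hψm : ∀ m : ℤ, Measurable (LPker φ m) := fun m => (psi_cont hrep m).measurable
  have hcont1 : Continuous (LP φ i ⇑V) := lp_cont hrep V.integrable i
  have hcont2 : Continuous (LP φ j ⇑w) := lp_cont hrep w.integrable j
  set f1 := LP φ i (⇑V) with hf1def
  set f2 := LP φ j (⇑w) with hf2def
  set h := fun y => f1 y * f2 y with hhdef
  have hmh : Measurable h := (hcont1.mul hcont2).measurable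
  set NV := eLpNorm (⇑V) (ENNReal.ofReal q) volume with hNVdef
  set N2 := eLpNorm f2 (ENNReal.ofReal r) volume with hN2def
  set X := ENNReal.ofReal ((2:ℝ) ^ (((i:ℝ) * (n:ℝ)) * (1/q))) with hXdef
  have step0 : eLpNorm (fun x => LP φ k h x) (ENNReal.ofReal r) volume ≤
      eLpNorm h 1 volume * eLpNorm (LPker φ k) (ENNReal.ofReal r) volume :=
    conv_L1_Lp (hψm k) hmh hr1.le
  have hExp : (1:ℝ≥0∞) / 1 = 1 / ENNReal.ofReal r' + 1 / ENNReal.ofReal r := by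
    have e1 : (1:ℝ≥0∞) / ENNReal.ofReal r' = ENNReal.ofReal (1/r') := by
      rw [one_div, ← ENNReal.ofReal_inv_of_pos hr'0, one_div]
    have e2 : (1:ℝ≥0∞) / ENNReal.ofReal r = ENNReal.ofReal (1/r) := by
      rw [one_div, ← ENNReal.ofReal_inv_of_pos hr0, one_div]
    rw [e1, e2, ← ENNReal.ofReal_add (by positivity) (by positivity)]
    rw [show 1/r' + 1/r = 1 by rw [one_div, one_div]; linarith]
    simp
  have step1 : eLpNorm h 1 volume ≤
      eLpNorm f1 (ENNReal.ofReal r') volume * eLpNorm f2 (ENNReal.ofReal r) volume := by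
    haveI : ENNReal.HolderTriple (ENNReal.ofReal r') (ENNReal.ofReal r) 1 :=
      ⟨by simpa [one_div] using hExp.symm⟩
    refine (eLpNorm_le_eLpNorm_mul_eLpNorm'_of_norm (p := ENNReal.ofReal r') (q := ENNReal.ofReal r)
      (r := 1) hcont1.aestronglyMeasurable
      hcont2.aestronglyMeasurable (· * ·) 1 (Filter.Eventually.of_forall fun x => ?_)).trans
      (by simp)
    simp
  have step2 : eLpNorm f1 (ENNReal.ofReal r') volume ≤
      eLpNorm f1 ⊤ volume ^ (1 - θ) * eLpNorm f1 (ENNReal.ofReal q) volume ^ θ := by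
    have := interp hcont1.aestronglyMeasurable hq0 hqr'.le
    rwa [hθdef]
  have step3 : eLpNorm f1 ⊤ volume ≤
      NV * eLpNorm (LPker φ i) (ENNReal.ofReal q') volume :=
    conv_top (hψm i) V.continuous.measurable hqc
  have step4 : eLpNorm f1 (ENNReal.ofReal q) volume ≤
      NV * eLpNorm (LPker φ i) 1 volume :=
    conv_Lp_L1 (hψm i) V.continuous.measurable hq1.le
  have hPr : eLpNorm (LPker φ k) (ENNReal.ofReal r) volume ≤
      ENNReal.ofReal ((2:ℝ) ^ ((n:ℝ) * (k:ℝ) * (1 - 1/r))) * Ar := by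
    have hh := psi_norm_bound hrep k hr1.le
    rwa [show ((k:ℝ) * (n:ℝ)) * (1 - 1/r) = (n:ℝ) * (k:ℝ) * (1 - 1/r) by ring] at hh
  have hPq' : eLpNorm (LPker φ i) (ENNReal.ofReal q') volume ≤ X * Aq' := by
    have hh := psi_norm_bound hrep i hq'1
    have he : 1 - 1/q' = 1/q := by rw [one_div, one_div]; linarith
    rwa [he] at hh
  have hP1 : eLpNorm (LPker φ i) 1 volume ≤ A1 := by
    have hh := psi_norm_bound hrep i (le_refl (1:ℝ))
    rw [show (1:ℝ) - 1/1 = 0 by norm_num, mul_zero, Real.rpow_zero, ENNReal.ofReal_one,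
      one_mul] at hh
    exact hh
  have step5 : eLpNorm f1 (ENNReal.ofReal r') volume ≤
      (NV * (X * Aq')) ^ (1-θ) * (NV * A1) ^ θ := by
    refine step2.trans (mul_le_mul' (ENNReal.rpow_le_rpow ?_ h1θ0)
      (ENNReal.rpow_le_rpow ?_ hθ0))
    · exact step3.trans (mul_le_mul_right hPq' _)
    · exact step4.trans (mul_le_mul_right hP1 _)
  have key : ∀ a b cc : ℝ≥0∞, (a*b)^(1-θ) * (a*cc)^θ = a * (b^(1-θ) * cc^θ) := by
    intro a b cc
    rw [ENNReal.mul_rpow_of_nonneg _ _ h1θ0, ENNReal.mul_rpow_of_nonneg _ _ hθ0]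
    calc a^(1-θ) * b^(1-θ) * (a^θ * cc^θ) = (a^(1-θ) * a^θ) * (b^(1-θ) * cc^θ) := by ring
      _ = a * (b^(1-θ) * cc^θ) := by
          rw [← ENNReal.rpow_add_of_nonneg _ _ h1θ0 hθ0, sub_add_cancel, ENNReal.rpow_one]
  have hb3 : (X * Aq') ^ (1-θ) = X ^ (1-θ) * Aq' ^ (1-θ) :=
    ENNReal.mul_rpow_of_nonneg _ _ h1θ0
  have hb4 : X ^ (1-θ) ≤
      ENNReal.ofReal ((2:ℝ) ^ (3 * (n:ℝ) * c)) * ENNReal.ofReal ((2:ℝ) ^ ((n:ℝ) * (j:ℝ) * c)) := by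
    rw [hXdef, ENNReal.ofReal_rpow_of_nonneg (by positivity) h1θ0,
      ← ENNReal.ofReal_mul (by positivity)]
    refine ENNReal.ofReal_le_ofReal ?_
    rw [← Real.rpow_mul (by norm_num : (0:ℝ) ≤ 2), ← Real.rpow_add (by norm_num : (0:ℝ) < 2)]
    refine Real.rpow_le_rpow_of_exponent_le (by norm_num) ?_
    have he : ((i:ℝ) * (n:ℝ)) * (1/q) * (1-θ) = (i:ℝ) * (n:ℝ) * c := by
      rw [mul_assoc ((i:ℝ) * (n:ℝ)), hqc']
    rw [he]
    have hn0 : (0:ℝ) ≤ (n:ℝ) := Nat.cast_nonneg n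
    nlinarith [mul_nonneg hn0 hc0.le]
  calc eLpNorm (fun x => LP φ k h x) (ENNReal.ofReal r) volume
      ≤ eLpNorm h 1 volume * eLpNorm (LPker φ k) (ENNReal.ofReal r) volume := step0
    _ ≤ (((NV * (X * Aq')) ^ (1-θ) * (NV * A1) ^ θ) * N2) *
        (ENNReal.ofReal ((2:ℝ) ^ ((n:ℝ) * (k:ℝ) * (1 - 1/r))) * Ar) :=
        mul_le_mul' (step1.trans (mul_le_mul_left step5 N2)) hPr
    _ = ((NV * ((X ^ (1-θ) * Aq' ^ (1-θ)) * A1 ^ θ)) * N2) *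
        (ENNReal.ofReal ((2:ℝ) ^ ((n:ℝ) * (k:ℝ) * (1 - 1/r))) * Ar) := by
        rw [key, hb3]
    _ ≤ ((NV * (((ENNReal.ofReal ((2:ℝ) ^ (3 * (n:ℝ) * c)) *
          ENNReal.ofReal ((2:ℝ) ^ ((n:ℝ) * (j:ℝ) * c))) * Aq' ^ (1-θ)) * A1 ^ θ)) * N2) *
        (ENNReal.ofReal ((2:ℝ) ^ ((n:ℝ) * (k:ℝ) * (1 - 1/r))) * Ar) := by
        gcongr
    _ = ENNReal.ofReal
            (D.toReal * (2:ℝ) ^ (3 * (n:ℝ) * c) * (2:ℝ) ^ ((n:ℝ) * (k:ℝ) * (1 - 1/r)) *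
              (2:ℝ) ^ ((n:ℝ) * (j:ℝ) * c)) * NV * N2 := by
        rw [ENNReal.ofReal_mul (by positivity), ENNReal.ofReal_mul (by positivity),
          ENNReal.ofReal_mul ENNReal.toReal_nonneg, ENNReal.ofReal_toReal hDt, hDdef]
        ring
  done
end
end
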